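/- Suppose ω ≥ 0 has density p with ∫_0^∞ exp(-c²ω/2) p(ω) dω = 1/cosh(c/2) for all c ∈ ℝ, and this integral may be differentiated under the integral sign in c. Define the tilted density p_c(ω) = exp(-c²ω/2) cosh(c/2) p(ω) for c ≠ 0. Then p_c is a probability density on (0, ∞), and its mean satisfies ∫_0^∞ ω p_c(ω) dω = (1/(2c)) tanh(c/2). -/

import Mathlib

open MeasureTheory

theorem tilted_polya_gamma_density_and_mean (p : ℝ → ℝ)
    (hp_nonneg : ∀ ω, 0 ≤ p ω)
    (hLaplace : ∀ c : ℝ,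
      ∫ ω in Set.Ioi (0 : ℝ), Real.exp (-c ^ 2 * ω / 2) * p ω = 1 / Real.cosh (c / 2))
    (hderiv : ∀ c : ℝ,
      HasDerivAt (fun c' : ℝ => ∫ ω in Set.Ioi (0 : ℝ), Real.exp (-c' ^ 2 * ω / 2) * p ω)
        (∫ ω in Set.Ioi (0 : ℝ), (-c * ω) * Real.exp (-c ^ 2 * ω / 2) * p ω) c) :
    ∀ c : ℝ, c ≠ 0 →
      (∀ ω, 0 ≤ Real.exp (-c ^ 2 * ω / 2) * Real.cosh (c / 2) * p ω) ∧
      (∫ ω in Set.Ioi (0 : ℝ), Real.exp (-c ^ 2 * ω / 2) * Real.cosh (c / 2) * p ω = 1) ∧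
      ∫ ω in Set.Ioi (0 : ℝ), ω * (Real.exp (-c ^ 2 * ω / 2) * Real.cosh (c / 2) * p ω) =
        1 / (2 * c) * Real.tanh (c / 2) := by
  intro c hc
  have hcoshpos : 0 < Real.cosh (c / 2) := Real.cosh_pos _
  have hcoshne : Real.cosh (c / 2) ≠ 0 := ne_of_gt hcoshpos
  refine ⟨?_, ?_, ?_⟩
  · intro ω
    have := hp_nonneg ω; positivity
  · have : (∫ ω in Set.Ioi (0 : ℝ),
        Real.exp (-c ^ 2 * ω / 2) * Real.cosh (c / 2) * p ω) =
        Real.cosh (c / 2) * ∫ ω in Set.Ioi (0 : ℝ),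
          Real.exp (-c ^ 2 * ω / 2) * p ω := by
      rw [← integral_const_mul]
      congr 1; funext ω; ring
    rw [this, hLaplace c]
    field_simp
  · -- derivative of RHS
    have hcosh : HasDerivAt (fun c' : ℝ => Real.cosh (c' / 2))
        (Real.sinh (c / 2) * (1 / 2)) c := by
      have := (Real.hasDerivAt_cosh (c / 2)).comp c
        ((hasDerivAt_id c).div_const 2)
      simpa [Function.comp_def] using this
    have hg : HasDerivAt (fun c' : ℝ => 1 / Real.cosh (c' / 2))
        (-(Real.sinh (c / 2) * (1 / 2)) / Real.cosh (c / 2) ^ 2) c := by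
      simpa [one_div, Pi.inv_def] using hcosh.inv hcoshne
    have heq : (fun c' : ℝ => ∫ ω in Set.Ioi (0 : ℝ),
        Real.exp (-c' ^ 2 * ω / 2) * p ω) =
        fun c' : ℝ => 1 / Real.cosh (c' / 2) := funext hLaplace
    have hD : (∫ ω in Set.Ioi (0 : ℝ),
        (-c * ω) * Real.exp (-c ^ 2 * ω / 2) * p ω) =
        -(Real.sinh (c / 2) * (1 / 2)) / Real.cosh (c / 2) ^ 2 := by
      have h1 := hderiv c
      rw [heq] at h1
      exact h1.unique hg
    have hlin : (∫ ω in Set.Ioi (0 : ℝ),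
        (-c * ω) * Real.exp (-c ^ 2 * ω / 2) * p ω) =
        (-c) * ∫ ω in Set.Ioi (0 : ℝ),
          ω * (Real.exp (-c ^ 2 * ω / 2) * p ω) := by
      rw [← integral_const_mul]
      congr 1; funext ω; ring
    have hmean : (∫ ω in Set.Ioi (0 : ℝ),
        ω * (Real.exp (-c ^ 2 * ω / 2) * p ω)) =
        Real.sinh (c / 2) / (2 * c * Real.cosh (c / 2) ^ 2) := by
      have := hlin.symm.trans hD
      field_simp at this ⊢
      nlinarith [this]
    have hfinal : (∫ ω in Set.Ioi (0 : ℝ),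
        ω * (Real.exp (-c ^ 2 * ω / 2) * Real.cosh (c / 2) * p ω)) =
        Real.cosh (c / 2) * ∫ ω in Set.Ioi (0 : ℝ),
          ω * (Real.exp (-c ^ 2 * ω / 2) * p ω) := by
      rw [← integral_const_mul]
      congr 1; funext ω; ring
    rw [hfinal, hmean, Real.tanh_eq_sinh_div_cosh]
    field_simp
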